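/- arXiv:1803.08095 — 7 statements merged into one kernel-verified Lean document; each statement's English description precedes it below -/
import Mathlib

section
/- For |q| < 1 and any injective function ψ : ℕ → ℕ (with positive values), the infinite product ∏_{n≥1} 1/(1 - q^{ψ(n)}) equals the double infinite product ∏_{i≥0} ∏_{n≥1} (1 + q^{2^i · ψ(n)}). -/
/-!
Each factor `(1 - x)⁻¹` with `x = q ^ ψ n` expands by Euler's identity as
`∏ i, (1 + x ^ 2 ^ i)`, since `(1 - x) ∏_{i<k} (1 + x ^ 2 ^ i) = 1 - x ^ 2 ^ k`. The resulting double
product may be reordered because `∑ i, ∑ n, |q| ^ (2 ^ i ψ n) ≤ ∑ i, |q| ^ i · ∑ n, |q| ^ ψ n < ∞`,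
using `i + m ≤ 2 ^ i m` for `m ≥ 1` and the injectivity of `ψ`.
-/

open Filter Topology

lemma one_sub_mul_prod_range_one_add_pow_two_pow {R : Type*} [CommRing R] (x : R) (k : ℕ) :
    (1 - x) * ∏ i ∈ Finset.range k, (1 + x ^ 2 ^ i) = 1 - x ^ 2 ^ k := by
  induction k with
  | zero => simp
  | succ k ih =>
    rw [Finset.prod_range_succ, ← mul_assoc, ih, pow_succ, pow_mul]
    ring

lemma hasProd_one_add_pow_two_pow {𝕜 : Type*} [NormedField 𝕜] [CompleteSpace 𝕜] {x : 𝕜}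
    (hx : ‖x‖ < 1) : HasProd (fun i : ℕ ↦ 1 + x ^ 2 ^ i) (1 - x)⁻¹ := by
  have hsummable : Summable fun i : ℕ ↦ ‖x ^ 2 ^ i‖ := by
    simp only [norm_pow]
    exact (summable_geometric_of_lt_one (norm_nonneg x) hx).comp_injective
      (Nat.pow_right_injective le_rfl)
  have hx₁ : 1 - x ≠ 0 := sub_ne_zero.mpr fun h ↦ by simp [← h] at hx
  rw [(multipliable_one_add_of_summable hsummable).hasProd_iff_tendsto_nat]
  have hpow : Tendsto (fun k : ℕ ↦ x ^ 2 ^ k) atTop (𝓝 0) :=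
    (tendsto_pow_atTop_nhds_zero_of_norm_lt_one hx).comp
      (tendsto_pow_atTop_atTop_of_one_lt (α := ℕ) one_lt_two)
  have hlim := (tendsto_const_nhds (x := (1 : 𝕜)).sub hpow).const_mul (1 - x)⁻¹
  rw [sub_zero, mul_one] at hlim
  refine hlim.congr fun k ↦ ?_
  rw [← one_sub_mul_prod_range_one_add_pow_two_pow, inv_mul_cancel_left₀ hx₁]

lemma tprod_one_add_comm {R β γ : Type*} [NormedCommRing R] [NormOneClass R] [CompleteSpace R]
    {f : β → γ → R} (hf : Summable fun p : β × γ ↦ ‖f p.1 p.2‖) :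
    ∏' (c) (b), (1 + f b c) = ∏' (b) (c), (1 + f b c) :=
  Multipliable.tprod_comm' (multipliable_one_add_of_summable hf)
    (fun b ↦ multipliable_one_add_of_summable (hf.comp_injective (Prod.mk_right_injective b)))
    (fun c ↦ multipliable_one_add_of_summable (hf.comp_injective (Prod.mk_left_injective c)))

lemma add_le_two_pow_mul (i : ℕ) {m : ℕ} (hm : 1 ≤ m) : i + m ≤ 2 ^ i * m :=
  calc i + m ≤ (i + 1) * m := by nlinarith
    _ ≤ 2 ^ i * m := Nat.mul_le_mul_right m (Nat.lt_two_pow_self)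

lemma summable_pow_two_pow_mul {r : ℝ} (hr₀ : 0 ≤ r) (hr₁ : r < 1) {ψ : ℕ → ℕ}
    (hinj : Function.Injective ψ) (hpos : ∀ n, 1 ≤ ψ n) :
    Summable fun p : ℕ × ℕ ↦ r ^ (2 ^ p.1 * ψ p.2) := by
  have hgeom := summable_geometric_of_lt_one hr₀ hr₁
  have hprod : Summable fun p : ℕ × ℕ ↦ r ^ p.1 * r ^ ψ p.2 :=
    hgeom.mul_of_nonneg (hgeom.comp_injective hinj) (fun _ ↦ pow_nonneg hr₀ _) fun _ ↦ pow_nonneg hr₀ _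
  refine hprod.of_nonneg_of_le (fun _ ↦ by positivity) fun p ↦ ?_
  rw [← pow_add]
  exact pow_le_pow_of_le_one hr₀ hr₁.le (add_le_two_pow_mul p.1 (hpos p.2))

theorem stmt_0 (q : ℂ) (hq : ‖q‖ < 1) (ψ : ℕ → ℕ)
    (hinj : Function.Injective ψ) (hpos : ∀ n, 1 ≤ ψ n) :
    ∏' n : ℕ, ((1 : ℂ) - q ^ ψ n)⁻¹ =
      ∏' i : ℕ, ∏' n : ℕ, ((1 : ℂ) + q ^ (2 ^ i * ψ n)) := by
  have heuler (n : ℕ) : ((1 : ℂ) - q ^ ψ n)⁻¹ = ∏' i : ℕ, ((1 : ℂ) + q ^ (2 ^ i * ψ n)) := by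
    have hqn : ‖q ^ ψ n‖ < 1 := by
      rw [norm_pow]
      exact pow_lt_one₀ (norm_nonneg q) hq (Nat.one_le_iff_ne_zero.mp (hpos n))
    simp only [mul_comm (2 ^ _), pow_mul]
    exact (hasProd_one_add_pow_two_pow hqn).tprod_eq.symm
  have hsummable : Summable fun p : ℕ × ℕ ↦ ‖q ^ (2 ^ p.1 * ψ p.2)‖ := by
    simpa only [norm_pow] using summable_pow_two_pow_mul (norm_nonneg q) hq hinj hpos
  rw [tprod_congr heuler]
  exact tprod_one_add_comm hsummable
end

section
/- For |q| < 1, any injective ψ : ℕ → ℕ with positive values, and any positive integer α, the infinite product ∏_{n≥1} 1/(1 - q^{ψ(n)}) equals ∏_{i≥0} ∏_{n≥1} (1 + q^{(α+1)^i ψ(n)} + q^{2(α+1)^i ψ(n)} + ... + q^{α (α+1)^i ψ(n)}). -/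
/-!
For a single `x` with `‖x‖ < 1`, the product `∏_{i < N} (1 + y_i + ⋯ + y_i^α)` with
`y_i = x^((α+1)^i)` telescopes: multiplying by `1 - x` gives `1 - x^((α+1)^N)`, so the infinite
product is `(1 - x)⁻¹` (uniqueness of base-`(α+1)` digits). Applying this to `x = q^ψ(n)` and
exchanging the two products, which is legitimate because `∑_{i,n} ‖q‖^((α+1)^i ψ(n))` converges
when `ψ` is injective, gives the theorem.
-/

open Finset Filter Topology

section Multipliable

variable {ι β γ R : Type*} [NormedCommRing R] [NormOneClass R] [CompleteSpace R]

lemma multipliable_of_summable_norm_sub_one {f : ι → R} (h : Summable fun i ↦ ‖f i - 1‖) :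
    Multipliable f := by
  simpa using multipliable_one_add_of_summable h

lemma tprod_comm_of_summable_norm_sub_one {f : β → γ → R}
    (h : Summable fun p : β × γ ↦ ‖f p.1 p.2 - 1‖) :
    ∏' (c) (b), f b c = ∏' (b) (c), f b c :=
  (multipliable_of_summable_norm_sub_one h).tprod_comm'
    (fun b ↦ multipliable_of_summable_norm_sub_one (h.prod_factor b))
    (fun c ↦ multipliable_of_summable_norm_sub_one (h.prod_symm.prod_factor c))

end Multipliable

section GeomSum

variable {𝕜 : Type*} [NormedField 𝕜]

lemma norm_geom_sum_sub_one_le {y : 𝕜} (hy : ‖y‖ ≤ 1) (m : ℕ) :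
    ‖∑ k ∈ range (m + 1), y ^ k - 1‖ ≤ m * ‖y‖ := by
  rw [sum_range_succ', pow_zero, add_sub_cancel_right]
  calc ‖∑ k ∈ range m, y ^ (k + 1)‖ ≤ ∑ k ∈ range m, ‖y ^ (k + 1)‖ := norm_sum_le _ _
    _ ≤ ∑ _k ∈ range m, ‖y‖ := by
        gcongr with k
        rw [norm_pow]
        exact pow_le_of_le_one (norm_nonneg y) hy k.succ_ne_zero
    _ = m * ‖y‖ := by simp

lemma one_sub_mul_prod_geom_sum_pow_pow (x : 𝕜) (b N : ℕ) :
    (1 - x) * ∏ i ∈ range N, ∑ k ∈ range b, (x ^ b ^ i) ^ k = 1 - x ^ b ^ N := by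
  induction N with
  | zero => simp
  | succ N ih =>
    rw [prod_range_succ, ← mul_assoc, ih, mul_neg_geom_sum, ← pow_mul, ← pow_succ]

lemma hasProd_geom_sum_pow_pow [CompleteSpace 𝕜] {x : 𝕜} (hx : ‖x‖ < 1) {α : ℕ} (hα : 1 ≤ α) :
    HasProd (fun i ↦ ∑ k ∈ range (α + 1), (x ^ (α + 1) ^ i) ^ k) (1 - x)⁻¹ := by
  have hx1 : 1 - x ≠ 0 := by
    intro h
    rw [← sub_eq_zero.mp h, norm_one] at hx
    exact hx.false
  have hmul : Multipliable fun i ↦ ∑ k ∈ range (α + 1), (x ^ (α + 1) ^ i) ^ k := by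
    refine multipliable_of_summable_norm_sub_one <|
      ((summable_geometric_of_lt_one (norm_nonneg x) hx).mul_left (α : ℝ)).of_nonneg_of_le
        (fun _ ↦ norm_nonneg _) fun i ↦ ?_
    have hpow : ‖x ^ (α + 1) ^ i‖ ≤ ‖x‖ ^ i := by
      rw [norm_pow]
      exact pow_le_pow_of_le_one (norm_nonneg x) hx.le (Nat.lt_pow_self (by omega)).le
    calc _ ≤ α * ‖x ^ (α + 1) ^ i‖ := norm_geom_sum_sub_one_le (hpow.trans (by bound)) α
      _ ≤ α * ‖x‖ ^ i := by gcongr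
  rw [hmul.hasProd_iff_tendsto_nat]
  have hpartial : ∀ N, ∏ i ∈ range N, ∑ k ∈ range (α + 1), (x ^ (α + 1) ^ i) ^ k =
      (1 - x ^ (α + 1) ^ N) / (1 - x) := fun N ↦ by
    rw [eq_div_iff hx1, mul_comm, one_sub_mul_prod_geom_sum_pow_pow]
  have hlim : Tendsto (fun N ↦ x ^ (α + 1) ^ N) atTop (𝓝 0) :=
    (tendsto_pow_atTop_nhds_zero_of_norm_lt_one hx).comp
      (tendsto_pow_atTop_atTop_of_one_lt (by omega))
  simpa [hpartial, div_eq_mul_inv] using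
    ((tendsto_const_nhds (x := (1 : 𝕜))).sub hlim).div_const (1 - x)

lemma add_le_pow_mul {b : ℕ} (hb : 2 ≤ b) (i : ℕ) {n : ℕ} (hn : 1 ≤ n) : i + n ≤ b ^ i * n :=
  calc i + n ≤ (i + 1) * n := by nlinarith
    _ ≤ b ^ i * n := Nat.mul_le_mul_right n (Nat.lt_pow_self hb)

lemma summable_norm_geom_sum_pow_pow_sub_one {q : 𝕜} (hq : ‖q‖ < 1) {ψ : ℕ → ℕ}
    (hinj : ψ.Injective) (hpos : ∀ n, 1 ≤ ψ n) {α : ℕ} (hα : 1 ≤ α) :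
    Summable fun p : ℕ × ℕ ↦ ‖∑ k ∈ range (α + 1), ((q ^ ψ p.2) ^ (α + 1) ^ p.1) ^ k - 1‖ := by
  have hgeom := summable_geometric_of_lt_one (norm_nonneg q) hq
  have hmajorant : Summable fun p : ℕ × ℕ ↦ α * (‖q‖ ^ p.1 * ‖q‖ ^ ψ p.2) :=
    (hgeom.mul_of_nonneg (hgeom.comp_injective hinj) (fun _ ↦ pow_nonneg (norm_nonneg q) _)
      fun _ ↦ pow_nonneg (norm_nonneg q) _).mul_left (α : ℝ)
  refine hmajorant.of_nonneg_of_le (fun _ ↦ norm_nonneg _) fun ⟨i, n⟩ ↦ ?_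
  have hy : ‖(q ^ ψ n) ^ (α + 1) ^ i‖ ≤ ‖q‖ ^ i * ‖q‖ ^ ψ n := by
    rw [← pow_mul, norm_pow, ← pow_add, mul_comm]
    exact pow_le_pow_of_le_one (norm_nonneg q) hq.le
      (add_le_pow_mul (b := α + 1) (by omega) i (hpos n))
  have hy1 : ‖(q ^ ψ n) ^ (α + 1) ^ i‖ ≤ 1 :=
    hy.trans (by rw [← pow_add]; exact pow_le_one₀ (norm_nonneg q) hq.le)
  calc _ ≤ α * ‖(q ^ ψ n) ^ (α + 1) ^ i‖ := norm_geom_sum_sub_one_le hy1 α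
    _ ≤ α * (‖q‖ ^ i * ‖q‖ ^ ψ n) := by gcongr

end GeomSum

theorem stmt_1 (q : ℂ) (hq : ‖q‖ < 1) (ψ : ℕ → ℕ)
    (hinj : Function.Injective ψ) (hpos : ∀ n, 1 ≤ ψ n)
    (α : ℕ) (hα : 1 ≤ α) :
    ∏' n : ℕ, ((1 : ℂ) - q ^ ψ n)⁻¹ =
      ∏' i : ℕ, ∏' n : ℕ, ∑ k ∈ Finset.range (α + 1),
        q ^ (k * ((α + 1) ^ i * ψ n)) := by
  have hterm : ∀ i n k, q ^ (k * ((α + 1) ^ i * ψ n)) = ((q ^ ψ n) ^ (α + 1) ^ i) ^ k :=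
    fun i n k ↦ by rw [← pow_mul, ← pow_mul]; ring_nf
  simp_rw [hterm]
  rw [← tprod_comm_of_summable_norm_sub_one
    (f := fun i n ↦ ∑ k ∈ range (α + 1), ((q ^ ψ n) ^ (α + 1) ^ i) ^ k)
    (summable_norm_geom_sum_pow_pow_sub_one hq hinj hpos hα)]
  refine tprod_congr fun n ↦ (hasProd_geom_sum_pow_pow ?_ hα).tprod_eq.symm
  rw [norm_pow]
  exact pow_lt_one₀ (norm_nonneg q) hq (Nat.one_le_iff_ne_zero.mp (hpos n))
end

section
/- For |q| < 1, any injective ψ : ℕ → ℕ with positive values, any positive integer α, and any natural number I, the finite identity ∏_{n≥1} (1 - q^{(α+1)^{I+1} ψ(n)}) = ∏_{n≥1} (1 - q^{ψ(n)}) · ∏_{i=0}^{I} ∏_{n≥1} (1 + q^{(α+1)^i ψ(n)} + ... + q^{α(α+1)^i ψ(n)}) holds. -/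
/-!
Since `1 - x ^ (α + 1) = (1 - x) (1 + x + ⋯ + x ^ α)`, substituting `x = q ^ (m ψ n)` and
multiplying over `n` gives
`∏ (1 - q ^ ((α + 1) m ψ n)) = ∏ (1 - q ^ (m ψ n)) · ∏ (1 + q ^ (m ψ n) + ⋯ + q ^ (α m ψ n))`;
all three products converge because `n ↦ m ψ n` is injective, so `∑ ‖q‖ ^ (m ψ n)` is dominated
by a geometric series. Applying this with `m = (α + 1) ^ i` for `i = I, …, 0` telescopes.
-/

open Finset

lemma summable_norm_pow_comp_injective {R : Type*} [NormedRing R] [NormOneClass R] {q : R}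
    (hq : ‖q‖ < 1) {e : ℕ → ℕ} (he : Function.Injective e) : Summable fun n ↦ ‖q ^ e n‖ :=
  ((summable_geometric_of_lt_one (norm_nonneg q) hq).comp_injective he).of_nonneg_of_le
    (fun _ ↦ norm_nonneg _) fun n ↦ norm_pow_le q (e n)

variable {R : Type*} [NormedCommRing R] [NormOneClass R] [CompleteSpace R] {q : R}

lemma multipliable_one_sub_pow_comp_injective (hq : ‖q‖ < 1) {e : ℕ → ℕ}
    (he : Function.Injective e) : Multipliable fun n ↦ 1 - q ^ e n := by
  simpa only [sub_eq_add_neg] using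
    multipliable_one_add_of_summable (f := fun n ↦ -q ^ e n)
      (by simpa only [norm_neg] using summable_norm_pow_comp_injective hq he)

lemma multipliable_geom_sum_pow_comp_injective (hq : ‖q‖ < 1) {e : ℕ → ℕ}
    (he : Function.Injective e) (α : ℕ) :
    Multipliable fun n ↦ ∑ k ∈ range (α + 1), q ^ (k * e n) := by
  have hsum : Summable fun n ↦ ∑ k ∈ range α, ‖q ^ ((k + 1) * e n)‖ :=
    summable_sum fun k _ ↦
      summable_norm_pow_comp_injective hq ((mul_right_injective₀ k.succ_ne_zero).comp he)
  have hmul :=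
    multipliable_one_add_of_summable (f := fun n ↦ ∑ k ∈ range α, q ^ ((k + 1) * e n))
      (hsum.of_nonneg_of_le (fun _ ↦ norm_nonneg _) fun n ↦ norm_sum_le _ _)
  refine hmul.congr fun n ↦ ?_
  rw [sum_range_succ', zero_mul, pow_zero, add_comm]

lemma tprod_one_sub_pow_succ_mul_comp_injective (hq : ‖q‖ < 1) {e : ℕ → ℕ}
    (he : Function.Injective e) (α : ℕ) :
    ∏' n, (1 - q ^ ((α + 1) * e n)) =
      (∏' n, (1 - q ^ e n)) * ∏' n, ∑ k ∈ range (α + 1), q ^ (k * e n) := by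
  rw [← (multipliable_one_sub_pow_comp_injective hq he).tprod_mul
    (multipliable_geom_sum_pow_comp_injective hq he α)]
  refine tprod_congr fun n ↦ ?_
  simp only [mul_comm _ (e n), pow_mul, mul_neg_geom_sum]

lemma tprod_one_sub_pow_pow_mul_comp_injective (hq : ‖q‖ < 1) {ψ : ℕ → ℕ}
    (hψ : Function.Injective ψ) (α I : ℕ) :
    ∏' n, (1 - q ^ ((α + 1) ^ (I + 1) * ψ n)) =
      (∏' n, (1 - q ^ ψ n)) *
        ∏ i ∈ range (I + 1), ∏' n, ∑ k ∈ range (α + 1), q ^ (k * ((α + 1) ^ i * ψ n)) := by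
  induction I with
  | zero =>
    simpa only [zero_add, pow_one, pow_zero, one_mul, prod_range_one] using
      tprod_one_sub_pow_succ_mul_comp_injective hq hψ α
  | succ I ih =>
    have he : Function.Injective fun n ↦ (α + 1) ^ (I + 1) * ψ n :=
      (mul_right_injective₀ (pow_ne_zero _ α.succ_ne_zero)).comp hψ
    simp only [pow_succ' (α + 1) (I + 1), mul_assoc]
    rw [tprod_one_sub_pow_succ_mul_comp_injective hq he, ih, prod_range_succ _ (I + 1), mul_assoc]

theorem stmt_2_general (q : ℂ) (hq : ‖q‖ < 1) (ψ : ℕ → ℕ)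
    (hinj : Function.Injective ψ)
    (α : ℕ) (I : ℕ) :
    ∏' n : ℕ, ((1 : ℂ) - q ^ ((α + 1) ^ (I + 1) * ψ n)) =
      (∏' n : ℕ, ((1 : ℂ) - q ^ ψ n)) *
        ∏ i ∈ Finset.range (I + 1), ∏' n : ℕ,
          ∑ k ∈ Finset.range (α + 1), q ^ (k * ((α + 1) ^ i * ψ n)) :=
  tprod_one_sub_pow_pow_mul_comp_injective hq hinj α I

theorem stmt_2 (q : ℂ) (hq : ‖q‖ < 1) (ψ : ℕ → ℕ)
    (hinj : Function.Injective ψ) (hpos : ∀ n, 1 ≤ ψ n)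
    (α : ℕ) (hα : 1 ≤ α) (I : ℕ) :
    ∏' n : ℕ, ((1 : ℂ) - q ^ ((α + 1) ^ (I + 1) * ψ n)) =
      (∏' n : ℕ, ((1 : ℂ) - q ^ ψ n)) *
        ∏ i ∈ Finset.range (I + 1), ∏' n : ℕ,
          ∑ k ∈ Finset.range (α + 1), q ^ (k * ((α + 1) ^ i * ψ n)) :=
  stmt_2_general q hq ψ hinj α I
end

section
/- Let A be a set of positive integers, p^A(n) the number of partitions of n into parts from A, and p^A_α(n) the number of such partitions with each part appearing at most α times. Then for every n ≥ 1, p^A(n) = ∑ over all sequences (N_0, N_1, N_2, ...) of nonnegative integers with n = ∑_{i≥0} (α+1)^i N_i of the product ∏_{i≥0} p^A_α(N_i). -/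
/-- Number of partitions of `n` with all parts in `A`. -/
noncomputable def pA (A : Set ℕ) (n : ℕ) : ℕ :=
  Nat.card {p : n.Partition // ∀ a ∈ p.parts, a ∈ A}

/-- Number of partitions of `n` with all parts in `A`, each part used at most `α` times. -/
noncomputable def pAres (A : Set ℕ) (α : ℕ) (n : ℕ) : ℕ :=
  Nat.card {p : n.Partition // (∀ a ∈ p.parts, a ∈ A) ∧ ∀ a, p.parts.count a ≤ α}

/-!
Record a partition of `n` by its multiplicity function `m`, and write every multiplicity in
base `b = α + 1`: `m = ∑ᵢ bⁱ • dᵢ` with all values of `dᵢ` below `b`. Each digit layer `dᵢ` is a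
partition of some `Nᵢ` into parts from `A` using every part at most `α` times, and
`n = ∑ᵢ bⁱ Nᵢ`.
Uniqueness of base-`b` expansions makes `m ↦ (dᵢ)ᵢ` a bijection, so grouping the families `(dᵢ)ᵢ`
by their sizes `(Nᵢ)ᵢ` gives the sum of products.
-/

open Finset Finsupp

namespace Nat

theorem sum_range_pow_mul_div_pow_mod (b m K : ℕ) :
    ∑ i ∈ range K, b ^ i * (m / b ^ i % b) = m % b ^ K := by
  induction K with
  | zero => simp [Nat.mod_one]
  | succ K ih => rw [sum_range_succ, ih, pow_succ, Nat.mod_mul]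

theorem sum_range_pow_mul_eq_ofDigits (b : ℕ) (u : ℕ → ℕ) (K : ℕ) :
    ∑ i ∈ range K, b ^ i * u i = ofDigits b ((List.range K).map u) := by
  induction K with
  | zero => simp
  | succ K ih =>
    rw [sum_range_succ, ih, List.range_succ, List.map_append, ofDigits_append]
    simp [ofDigits_singleton, mul_comm]

theorem eq_of_sum_range_pow_mul_eq {b : ℕ} (hb : 1 < b) {u v : ℕ → ℕ} (hu : ∀ i, u i < b)
    (hv : ∀ i, v i < b) {K : ℕ}
    (h : ∑ i ∈ range K, b ^ i * u i = ∑ i ∈ range K, b ^ i * v i) {i : ℕ} (hi : i < K) :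
    u i = v i := by
  rw [sum_range_pow_mul_eq_ofDigits, sum_range_pow_mul_eq_ofDigits] at h
  have := ofDigits_inj_of_len_eq hb (by simp) (by simpa using fun j _ => hu j)
    (by simpa using fun j _ => hv j) h
  exact List.map_inj_left.mp this i (List.mem_range.mpr hi)

theorem card_eq_finsum_card_fiber {α β : Type*} {P : α → Prop} {Q : β → Prop} (g : α → β)
    [Finite {y // Q y}] [Finite {a // P a ∧ Q (g a)}] :
    Nat.card {a // P a ∧ Q (g a)} = ∑ᶠ (y) (_ : Q y), Nat.card {a // P a ∧ g a = y} := by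
  let e : {a // P a ∧ Q (g a)} ≃ Σ y : {y // Q y}, {a // P a ∧ g a = y} :=
    { toFun a := ⟨⟨g a, a.2.2⟩, a, a.2.1, rfl⟩
      invFun x := ⟨x.2, x.2.2.1, by rw [x.2.2.2]; exact x.1.2⟩
      left_inv _ := rfl
      right_inv x := Sigma.subtype_ext (Subtype.ext x.2.2.2) rfl }
  have := Fintype.ofFinite {y // Q y}
  have (y : {y // Q y}) : Finite {a // P a ∧ g a = y} :=
    Finite.of_injective (β := {a // P a ∧ Q (g a)})
      (fun a => ⟨a, a.2.1, by rw [a.2.2]; exact y.2⟩)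
      fun _ _ h => Subtype.ext (by simpa using congrArg Subtype.val h)
  rw [Nat.card_congr e, Nat.card_sigma, ← finsum_eq_sum_of_fintype]
  exact finsum_subtype_eq_finsum_cond (f := fun y => Nat.card {a // P a ∧ g a = y}) Q

end Nat

namespace Finsupp

section OfDigits

variable {ι M N : Type*} [AddCommMonoid M] [AddCommMonoid N] {b : ℕ}

noncomputable def ofDigits (b : ℕ) (d : ℕ →₀ M) : M :=
  d.sum fun i x => b ^ i • x

theorem map_ofDigits (f : M →+ N) (d : ℕ →₀ M) :
    f (ofDigits b d) = ofDigits b (d.mapRange f f.map_zero) := by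
  simp [ofDigits, map_finsuppSum, sum_mapRange_index]

theorem ofDigits_apply (d : ℕ →₀ ι →₀ ℕ) (a : ι) :
    ofDigits b d a = ofDigits b (d.mapRange (· a) rfl) :=
  map_ofDigits (applyAddHom a) d

theorem ofDigits_eq_sum_range {u : ℕ →₀ ℕ} {K : ℕ} (h : u.support ⊆ range K) :
    ofDigits b u = ∑ i ∈ range K, b ^ i * u i :=
  sum_of_support_subset u h _ fun _ _ => smul_zero _

theorem pow_mul_le_ofDigits (u : ℕ →₀ ℕ) (i : ℕ) : b ^ i * u i ≤ ofDigits b u := by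
  by_cases hi : i ∈ u.support
  · exact Finset.single_le_sum (f := fun i => b ^ i * u i) (fun _ _ => Nat.zero_le _) hi
  · simp [notMem_support_iff.mp hi]

theorem ofDigits_eq_zero_iff (hb : b ≠ 0) {u : ℕ →₀ ℕ} : ofDigits b u = 0 ↔ u = 0 := by
  refine ⟨fun h => ext fun i => ?_, fun h => by simp [h, ofDigits]⟩
  have := pow_mul_le_ofDigits (b := b) u i
  simp_all

theorem support_ofDigits_subset_iff (hb : b ≠ 0) (d : ℕ →₀ ι →₀ ℕ) (S : Set ι) :
    ↑(ofDigits b d).support ⊆ S ↔ ∀ i, ↑(d i).support ⊆ S := by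
  have (a : ι) : ofDigits b d a = 0 ↔ ∀ i, d i a = 0 := by
    simp [ofDigits_apply, ofDigits_eq_zero_iff hb, Finsupp.ext_iff]
  simp only [Set.subset_def, mem_coe, mem_support_iff, ne_eq, this]
  grind

theorem injOn_ofDigits (hb : 1 < b) : Set.InjOn (ofDigits b) {u : ℕ →₀ ℕ | ∀ i, u i < b} := by
  intro u hu v hv h
  obtain ⟨K, hK⟩ := exists_nat_subset_range (u.support ∪ v.support)
  rw [ofDigits_eq_sum_range (union_subset_left hK),
    ofDigits_eq_sum_range (union_subset_right hK)] at h
  ext i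
  by_cases hi : i < K
  · exact Nat.eq_of_sum_range_pow_mul_eq hb hu hv h hi
  · have hiK : i ∉ u.support ∪ v.support := fun h' => hi (mem_range.mp (hK h'))
    simp_all

theorem injOn_ofDigits_finsupp (hb : 1 < b) :
    Set.InjOn (ofDigits b) {d : ℕ →₀ ι →₀ ℕ | ∀ i a, d i a < b} := by
  intro d hd d' hd' h
  ext i a
  have : d.mapRange (· a) rfl = d'.mapRange (· a) rfl :=
    injOn_ofDigits hb (fun i => hd i a) (fun i => hd' i a)
      (by rw [← ofDigits_apply d a, ← ofDigits_apply d' a, h])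
  exact DFunLike.congr_fun this i

theorem exists_ofDigits_eq (hb : 1 < b) (m : ι →₀ ℕ) :
    ∃ d : ℕ →₀ ι →₀ ℕ, (∀ i a, d i a < b) ∧ ofDigits b d = m := by
  set K := m.degree
  have hK (a : ι) : m a < b ^ K := (le_degree a m).trans_lt (Nat.lt_pow_self hb)
  let digit (i : ℕ) : ι →₀ ℕ := m.mapRange (fun k => k / b ^ i % b) (by simp)
  have digit_eq_zero (i : ℕ) (hi : K ≤ i) : digit i = 0 := by
    ext a
    simp [digit, Nat.div_eq_of_lt ((hK a).trans_le (Nat.pow_le_pow_right (by omega) hi))]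
  refine ⟨onFinset (range K) digit fun i hi => mem_range.mpr ?_, fun i a => ?_, ?_⟩
  · by_contra h
    exact hi (digit_eq_zero i (by omega))
  · exact Nat.mod_lt _ (by omega)
  · ext a
    rw [ofDigits_apply, ofDigits_eq_sum_range (support_mapRange.trans support_onFinset_subset)]
    simpa [digit, Nat.mod_eq_of_lt (hK a)] using Nat.sum_range_pow_mul_div_pow_mod b (m a) K

noncomputable def digitsEquiv (hb : 1 < b) (S : Set ι) (w : ι → ℕ) (n : ℕ) :
    {d : ℕ →₀ ι →₀ ℕ // (∀ i, ↑(d i).support ⊆ S ∧ ∀ a, d i a < b) ∧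
        ofDigits b (d.mapRange (weight w) (map_zero _)) = n} ≃
      {m : ι →₀ ℕ // ↑m.support ⊆ S ∧ weight w m = n} :=
  Equiv.ofBijective
    (fun d => ⟨ofDigits b d.1, by
      rw [support_ofDigits_subset_iff (by omega), map_ofDigits]
      exact ⟨fun i => (d.2.1 i).1, d.2.2⟩⟩)
    ⟨fun d d' h => Subtype.ext <| injOn_ofDigits_finsupp hb (fun i => (d.2.1 i).2)
        (fun i => (d'.2.1 i).2) (congrArg Subtype.val h),
      by
        rintro ⟨m, hmS, hmw⟩
        obtain ⟨d, hd, rfl⟩ := exists_ofDigits_eq hb m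
        rw [support_ofDigits_subset_iff (by omega)] at hmS
        rw [map_ofDigits] at hmw
        exact ⟨⟨d, fun i => ⟨hmS i, hd i⟩, hmw⟩, rfl⟩⟩

theorem finite_ofDigits_eq (hb : 1 < b) (n : ℕ) : Finite {N : ℕ →₀ ℕ // ofDigits b N = n} := by
  have : {N : ℕ →₀ ℕ | ofDigits b N = n} ⊆ (range (n + 1)).finsupp fun _ => range (n + 1) := by
    intro N hN
    have hle (i : ℕ) : b ^ i * N i ≤ n := hN ▸ pow_mul_le_ofDigits N i
    rw [mem_coe, mem_finsupp_iff]
    refine ⟨fun i hi => ?_, fun i _ => ?_⟩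
    · have hNi : 1 ≤ N i := Nat.pos_of_ne_zero (mem_support_iff.mp hi)
      have := Nat.lt_pow_self hb (n := i)
      simp only [mem_range]
      nlinarith [hle i]
    · simp only [mem_range]
      nlinarith [hle i, Nat.one_le_pow i b (by omega)]
  exact ((finite_toSet _).subset this).to_subtype

end OfDigits

section Pi

variable {ι X : Type*} [Zero X]

open scoped Classical in
noncomputable def subtypeForallEquivPi (F : ι → X → Prop) (s : Finset ι)
    (hs : ∀ i ∉ s, ∀ x, F i x ↔ x = 0) :
    {d : ι →₀ X // ∀ i, F i (d i)} ≃ ∀ i : s, {x // F i x} where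
  toFun d i := ⟨d.1 i, d.2 i⟩
  invFun g := ⟨onFinset s (fun i => if h : i ∈ s then g ⟨i, h⟩ else 0) fun i hi => by
      by_contra h
      simp [h] at hi,
    fun i => by
      by_cases h : i ∈ s
      · simpa [h] using (g ⟨i, h⟩).2
      · simpa [h] using (hs i h 0).mpr rfl⟩
  left_inv d := by
    ext i
    by_cases h : i ∈ s
    · simp [h]
    · simpa [h] using ((hs i h _).mp (d.2 i)).symm
  right_inv g := by
    ext
    simp

theorem card_subtype_forall (F : ι → X → Prop) (s : Finset ι)
    (hs : ∀ i ∉ s, ∀ x, F i x ↔ x = 0) :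
    Nat.card {d : ι →₀ X // ∀ i, F i (d i)} = ∏ᶠ i, Nat.card {x // F i x} := by
  rw [Nat.card_congr (subtypeForallEquivPi F s hs), Nat.card_pi,
    finprod_eq_prod_of_mulSupport_subset (s := s)]
  · exact prod_coe_sort s fun i => Nat.card {x // F i x}
  · intro i hi
    by_contra h
    have : Unique {x // F i x} :=
      ⟨⟨⟨0, (hs i h 0).mpr rfl⟩⟩, fun x => Subtype.ext ((hs i h x).mp x.2)⟩
    exact hi Nat.card_unique

end Pi

theorem weight_id_eq_sum_toMultiset (m : ℕ →₀ ℕ) : weight id m = (toMultiset m).sum :=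
  (sum_toMultiset m).symm

theorem eq_zero_of_weight_id_eq_zero {m : ℕ →₀ ℕ} (h0 : m 0 = 0) (h : weight id m = 0) :
    m = 0 := by
  ext a
  by_contra ha
  have := le_weight_of_ne_zero' id ha
  simp_all

end Finsupp

noncomputable def Nat.Partition.multiplicityEquiv (A : Set ℕ) (Q : (ℕ →₀ ℕ) → Prop) (n : ℕ) :
    {p : n.Partition // (∀ a ∈ p.parts, a ∈ A) ∧ Q (Multiset.toFinsupp p.parts)} ≃
      {m : ℕ →₀ ℕ // (↑m.support ⊆ A \ {0} ∧ Q m) ∧ weight id m = n} where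
  toFun p := ⟨Multiset.toFinsupp p.1.parts,
    ⟨fun a ha => by
      simp only [mem_coe, Multiset.toFinsupp_support, Multiset.mem_toFinset] at ha
      exact ⟨p.2.1 a ha, (p.1.parts_pos ha).ne'⟩, p.2.2⟩,
    by rw [weight_id_eq_sum_toMultiset, Multiset.toFinsupp_toMultiset, p.1.parts_sum]⟩
  invFun m := ⟨⟨toMultiset m.1,
      fun ha => Nat.pos_of_ne_zero (m.2.1.1 ((mem_toMultiset _ _).mp ha)).2,
      by rw [← weight_id_eq_sum_toMultiset]; exact m.2.2⟩,
    fun a ha => (m.2.1.1 ((mem_toMultiset _ _).mp ha)).1, by simpa using m.2.1.2⟩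
  left_inv p := by ext1; ext1; simp
  right_inv m := by ext1; simp

theorem pA_eq_card (A : Set ℕ) (n : ℕ) :
    pA A n = Nat.card {m : ℕ →₀ ℕ // ↑m.support ⊆ A \ {0} ∧ weight id m = n} := by
  simpa only [pA, and_true] using
    Nat.card_congr (Nat.Partition.multiplicityEquiv A (fun _ => True) n)

theorem finite_multiplicities (A : Set ℕ) (n : ℕ) :
    Finite {m : ℕ →₀ ℕ // ↑m.support ⊆ A \ {0} ∧ weight id m = n} := by
  simpa only [and_true] using
    Finite.of_equiv _ (Nat.Partition.multiplicityEquiv A (fun _ => True) n)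

theorem pAres_eq_card (A : Set ℕ) (α n : ℕ) :
    pAres A α n = Nat.card {m : ℕ →₀ ℕ //
      (↑m.support ⊆ A \ {0} ∧ ∀ a, m a < α + 1) ∧ weight id m = n} := by
  simpa only [pAres, Multiset.toFinsupp_apply, Nat.lt_succ_iff] using
    Nat.card_congr (Nat.Partition.multiplicityEquiv A (fun m => ∀ a, m a < α + 1) n)

theorem card_families_eq_finprod_pAres (A : Set ℕ) (α : ℕ) (N : ℕ →₀ ℕ) :
    Nat.card {d : ℕ →₀ ℕ →₀ ℕ // (∀ i, ↑(d i).support ⊆ A \ {0} ∧ ∀ a, d i a < α + 1) ∧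
      d.mapRange (weight id) (map_zero _) = N} = ∏ᶠ i, pAres A α (N i) := by
  rw [← finprod_congr fun i => (pAres_eq_card A α (N i)).symm,
    ← card_subtype_forall _ N.support]
  · exact Nat.card_congr (Equiv.subtypeEquivRight fun d => by simp [Finsupp.ext_iff, forall_and])
  · intro i hi x
    rw [notMem_support_iff.mp hi]
    constructor
    · rintro ⟨⟨hS, -⟩, hw⟩
      exact eq_zero_of_weight_id_eq_zero (notMem_support_iff.mp fun h0 => (hS h0).2 rfl) hw
    · rintro rfl
      simp

theorem stmt_4_general (A : Set ℕ) (α : ℕ) (hα : 1 ≤ α)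
    (n : ℕ) :
    pA A n =
      ∑ᶠ (f : ℕ →₀ ℕ) (_ : (f.sum fun i N => (α + 1) ^ i * N) = n),
        ∏ᶠ i : ℕ, pAres A α (f i) := by
  have hb : 1 < α + 1 := by omega
  have := finite_ofDigits_eq hb n
  have := finite_multiplicities A n
  have := Finite.of_equiv _ (digitsEquiv hb (A \ {0}) id n).symm
  rw [pA_eq_card, ← Nat.card_congr (digitsEquiv hb _ id n)]
  exact (Nat.card_eq_finsum_card_fiber (mapRange (weight id) (map_zero _))
    (Q := fun N => ofDigits (α + 1) N = n)).trans
    (finsum_congr fun N => finsum_congr fun _ => card_families_eq_finprod_pAres A α N)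

theorem stmt_4 (A : Set ℕ) (hA : ∀ a ∈ A, 0 < a) (α : ℕ) (hα : 1 ≤ α)
    (n : ℕ) (hn : 1 ≤ n) :
    pA A n =
      ∑ᶠ (f : ℕ →₀ ℕ) (_ : (f.sum fun i N => (α + 1) ^ i * N) = n),
        ∏ᶠ i : ℕ, pAres A α (f i) :=
  stmt_4_general A α hα n
end

section
/- Let A be a set of positive integers, p^A(n) the number of partitions of n into parts from A, and d^A(n) = p^A_1(n) the number of partitions of n into distinct parts from A. Then for every n ≥ 1, p^A(n) = ∑ over all nonnegative integer solutions (N_0, N_1, N_2, ...) of n = ∑_{i≥0} 2^i N_i of the product ∏_{i≥0} d^A(N_i). -/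
/-- Number of partitions of `n` into distinct parts from `A`. -/
noncomputable def dA (A : Set ℕ) (n : ℕ) : ℕ :=
  Nat.card {p : n.Partition // (∀ a ∈ p.parts, a ∈ A) ∧ p.parts.Nodup}

open Finset

theorem Nat.testBit_sum_two_pow {s : Finset ℕ} {i : ℕ} :
    (∑ j ∈ s, 2 ^ j).testBit i ↔ i ∈ s := by
  rw [← Nat.mem_bitIndices, ← List.mem_toFinset, toFinset_bitIndices_sum_two_pow]

namespace Multiset
variable {α : Type*}

def ofBinary (R : Finset (α × ℕ)) : Multiset α := ∑ q ∈ R, 2 ^ q.2 • {q.1}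

theorem sum_ofBinary {M : Type*} [AddCommMonoid M] (R : Finset (M × ℕ)) :
    (ofBinary R).sum = ∑ q ∈ R, 2 ^ q.2 • q.1 := by
  simp [ofBinary, sum_sum, sum_nsmul]

theorem mem_ofBinary {R : Finset (α × ℕ)} {a : α} :
    a ∈ ofBinary R ↔ ∃ i, (a, i) ∈ R := by
  simp [ofBinary, mem_sum, mem_nsmul, eq_comm]

variable [DecidableEq α]

theorem count_ofBinary (R : Finset (α × ℕ)) (a : α) :
    (ofBinary R).count a =
      ∑ i ∈ R.preimage (Prod.mk a) (Prod.mk_right_injective a).injOn, 2 ^ i := by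
  classical
  rw [ofBinary, count_sum', sum_preimage' (Prod.mk a) R _ (fun q => 2 ^ q.2), sum_filter]
  refine sum_congr rfl fun q _ => ?_
  obtain ⟨b, j⟩ := q
  simp [count_singleton, eq_comm]

def toBinary (m : Multiset α) : Finset (α × ℕ) :=
  m.toFinset.biUnion fun a => {a} ×ˢ (m.count a).bitIndices.toFinset

theorem mem_toBinary {m : Multiset α} {a : α} {i : ℕ} :
    (a, i) ∈ m.toBinary ↔ (m.count a).testBit i := by
  suffices (m.count a).testBit i → a ∈ m by simpa [toBinary]
  exact fun h => count_ne_zero.mp fun h0 => by simp [h0] at h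

def binaryEquiv : Multiset α ≃ Finset (α × ℕ) where
  toFun := toBinary
  invFun := ofBinary
  left_inv m := by
    ext a
    rw [count_ofBinary]
    convert sum_toFinset_bitIndices_two_pow (m.count a) using 2
    ext i
    simp [mem_toBinary]
  right_inv R := by
    ext ⟨a, i⟩
    rw [mem_toBinary, count_ofBinary, Nat.testBit_sum_two_pow, mem_preimage]

end Multiset

namespace Finset
variable {α ι : Type*}

noncomputable def level (R : Finset (α × ι)) (i : ι) : Finset α :=
  R.preimage (·, i) (Prod.mk_left_injective i).injOn

@[simp]
theorem mem_level {R : Finset (α × ι)} {i : ι} {a : α} : a ∈ R.level i ↔ (a, i) ∈ R :=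
  mem_preimage

noncomputable def levelSums [AddCommMonoid α] (R : Finset (α × ι)) : ι →₀ α :=
  ∑ q ∈ R, Finsupp.single q.2 q.1

theorem levelSums_apply [AddCommMonoid α] (R : Finset (α × ι)) (i : ι) :
    R.levelSums i = ∑ a ∈ R.level i, a := by
  classical
  rw [levelSums, Finsupp.finsetSum_apply, level, sum_preimage' (·, i) R _ Prod.fst, sum_filter]
  refine sum_congr rfl fun q _ => ?_
  obtain ⟨a, j⟩ := q
  simp [Finsupp.single_apply, eq_comm]

theorem sum_levelSums_two_pow_mul (R : Finset (ℕ × ℕ)) :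
    (R.levelSums.sum fun i N => 2 ^ i * N) = ∑ q ∈ R, 2 ^ q.2 * q.1 := by
  rw [levelSums, ← Finsupp.sum_finsetSum_index (fun _ => mul_zero _) (fun _ => mul_add _)]
  exact sum_congr rfl fun q _ => Finsupp.sum_single_index (mul_zero _)

variable [DecidableEq α] [DecidableEq ι]

def ofLevels (s : Finset ι) (t : s → Finset α) : Finset (α × ι) :=
  s.attach.biUnion fun i => t i ×ˢ {i.1}

theorem mem_ofLevels {s : Finset ι} {t : s → Finset α} {a : α} {i : ι} :
    (a, i) ∈ ofLevels s t ↔ ∃ h : i ∈ s, a ∈ t ⟨i, h⟩ := by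
  simp only [ofLevels, mem_biUnion, mem_attach, true_and, mem_product, mem_singleton]
  exact ⟨fun ⟨⟨j, hj⟩, ha, hij⟩ => by subst hij; exact ⟨hj, ha⟩,
    fun ⟨h, ha⟩ => ⟨⟨i, h⟩, ha, rfl⟩⟩

theorem level_ofLevels_of_mem {s : Finset ι} (t : s → Finset α) {i : ι} (h : i ∈ s) :
    (ofLevels s t).level i = t ⟨i, h⟩ := by
  ext a
  simp [mem_ofLevels, h]

theorem level_ofLevels_of_notMem {s : Finset ι} (t : s → Finset α) {i : ι} (h : i ∉ s) :
    (ofLevels s t).level i = ∅ := by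
  ext a
  simp [mem_ofLevels, h]

noncomputable def levelsEquiv (s : Finset ι) (P : ι → Finset α → Prop)
    (hP : ∀ i ∉ s, ∀ t, P i t ↔ t = ∅) :
    {R : Finset (α × ι) // ∀ i, P i (R.level i)} ≃ ∀ i : s, {t // P i t} where
  toFun R i := ⟨R.1.level i, R.2 i⟩
  invFun t := ⟨ofLevels s fun i => (t i).1, fun i => by
    by_cases h : i ∈ s
    · rw [level_ofLevels_of_mem _ h]
      exact (t ⟨i, h⟩).2
    · rw [level_ofLevels_of_notMem _ h, hP i h]⟩
  left_inv R := by
    ext ⟨a, i⟩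
    rw [mem_ofLevels]
    refine ⟨fun ⟨_, ha⟩ => mem_level.mp ha, fun ha => ⟨?_, mem_level.mpr ha⟩⟩
    by_contra h
    have hempty := (hP i h _).mp (R.2 i)
    exact notMem_empty a (hempty ▸ mem_level.mpr ha)
  right_inv t := by
    funext i
    exact Subtype.ext (level_ofLevels_of_mem _ i.2)

end Finset

theorem Finsupp.two_pow_mul_le_sum (f : ℕ →₀ ℕ) (i : ℕ) :
    2 ^ i * f i ≤ f.sum fun j N => 2 ^ j * N := by
  by_cases hi : i ∈ f.support
  · exact Finset.single_le_sum (f := fun j => 2 ^ j * f j) (fun _ _ => Nat.zero_le _) hi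
  · simp [Finsupp.notMem_support_iff.mp hi]

theorem Finsupp.finite_setOf_sum_two_pow_mul_eq (n : ℕ) :
    {f : ℕ →₀ ℕ | (f.sum fun i N => 2 ^ i * N) = n}.Finite := by
  refine ((range (n + 1)).finsupp fun _ => range (n + 1)).finite_toSet.subset fun f hf => ?_
  have hle (i : ℕ) : 2 ^ i * f i ≤ n := hf ▸ two_pow_mul_le_sum f i
  simp only [mem_coe, mem_finsupp_iff, subset_iff, mem_range, Nat.lt_succ_iff]
  refine ⟨fun i hi => ?_, fun i _ => ?_⟩
  · calc i ≤ 2 ^ i := Nat.lt_two_pow_self.le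
      _ ≤ 2 ^ i * f i := Nat.le_mul_of_pos_right _ (Nat.pos_of_ne_zero (mem_support_iff.mp hi))
      _ ≤ n := hle i
  · exact (Nat.le_mul_of_pos_left _ (Nat.two_pow_pos i)).trans (hle i)

theorem Nat.card_eq_sum_card_fiber {α β : Type*} {p : α → Prop} {q : β → Prop}
    [Finite {x // p x}] [Fintype {y // q y}] (g : α → β) (hg : ∀ x, p x → q (g x)) :
    Nat.card {x // p x} = ∑ y : {y // q y}, Nat.card {x // p x ∧ g x = y} := by
  let g' (x : {x // p x}) : {y // q y} := ⟨g x, hg x x.2⟩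
  rw [← Nat.card_congr (Equiv.sigmaFiberEquiv g'), Nat.card_sigma]
  refine sum_congr rfl fun y _ => Nat.card_congr ?_
  exact (Equiv.subtypeEquivRight fun x => Subtype.ext_iff).trans
    (Equiv.subtypeSubtypeEquivSubtypeInter p fun x => g x = y)

theorem pA_sep_pos (A : Set ℕ) : pA {a ∈ A | 0 < a} = pA A := by
  funext n
  exact Nat.card_congr <| Equiv.subtypeEquivRight fun p =>
    forall₂_congr fun _ ha => and_iff_left (p.parts_pos ha)

theorem dA_sep_pos (A : Set ℕ) : dA {a ∈ A | 0 < a} = dA A := by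
  funext n
  exact Nat.card_congr <| Equiv.subtypeEquivRight fun p =>
    and_congr_left' <| forall₂_congr fun _ ha => and_iff_left (p.parts_pos ha)

theorem dA_zero (A : Set ℕ) : dA A 0 = 1 := by
  rw [dA, Nat.card_eq_one_iff_unique]
  exact ⟨inferInstance, ⟨⟨default, by simp, by simp⟩⟩⟩

theorem finprod_dA_eq_prod_support (A : Set ℕ) (f : ℕ →₀ ℕ) :
    ∏ᶠ i, dA A (f i) = ∏ i ∈ f.support, dA A (f i) :=
  finprod_eq_prod_of_mulSupport_subset _ fun i hi =>
    Finsupp.mem_support_iff.mpr fun h0 => hi (by simp [h0, dA_zero])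

section PositiveParts
variable {A : Set ℕ} (hA : ∀ a ∈ A, 0 < a)
include hA

def partitionsEquivMultisets (n : ℕ) :
    {p : n.Partition // ∀ a ∈ p.parts, a ∈ A} ≃
      {m : Multiset ℕ // (∀ a ∈ m, a ∈ A) ∧ m.sum = n} where
  toFun p := ⟨p.1.parts, p.2, p.1.parts_sum⟩
  invFun m := ⟨⟨m.1, fun ha => hA _ (m.2.1 _ ha), m.2.2⟩, m.2.1⟩

def partitionsEquivBinary (n : ℕ) :
    {p : n.Partition // ∀ a ∈ p.parts, a ∈ A} ≃
      {R : Finset (ℕ × ℕ) // (∀ q ∈ R, q.1 ∈ A) ∧ ∑ q ∈ R, 2 ^ q.2 * q.1 = n} :=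
  (partitionsEquivMultisets hA n).trans <| (Multiset.binaryEquiv.symm.subtypeEquiv fun R => by
    simp [Multiset.binaryEquiv, Multiset.mem_ofBinary, Multiset.sum_ofBinary]).symm

theorem dA_eq_card_finsets (n : ℕ) :
    dA A n = Nat.card {t : Finset ℕ // (∀ a ∈ t, a ∈ A) ∧ ∑ a ∈ t, a = n} :=
  Nat.card_congr
    { toFun p := ⟨⟨p.1.parts, p.2.2⟩, p.2.1, by simpa using p.1.parts_sum⟩
      invFun t :=
        ⟨⟨t.1.1, fun ha => hA _ (t.2.1 _ ha), by simpa using t.2.2⟩, t.2.1, t.1.2⟩ }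

theorem card_levelSums_eq_prod_dA {n : ℕ} (f : ℕ →₀ ℕ)
    (hf : (f.sum fun i N => 2 ^ i * N) = n) :
    Nat.card {R : Finset (ℕ × ℕ) //
      ((∀ q ∈ R, q.1 ∈ A) ∧ ∑ q ∈ R, 2 ^ q.2 * q.1 = n) ∧ R.levelSums = f} =
      ∏ i ∈ f.support, dA A (f i) := by
  let P (i : ℕ) (t : Finset ℕ) : Prop := (∀ a ∈ t, a ∈ A) ∧ ∑ a ∈ t, a = f i
  have hP : ∀ i ∉ f.support, ∀ t, P i t ↔ t = ∅ := by
    intro i hi t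
    simp only [P, Finsupp.notMem_support_iff.mp hi, sum_eq_zero_iff]
    refine ⟨fun ⟨htA, ht0⟩ => eq_empty_of_forall_notMem fun a ha => ?_, by rintro rfl; simp⟩
    exact (hA a (htA a ha)).ne' (ht0 a ha)
  have hfiber : ∀ R : Finset (ℕ × ℕ),
      ((∀ q ∈ R, q.1 ∈ A) ∧ ∑ q ∈ R, 2 ^ q.2 * q.1 = n) ∧ R.levelSums = f ↔
        ∀ i, P i (R.level i) := by
    intro R
    simp only [P, forall_and, mem_level, ← levelSums_apply, ← Finsupp.ext_iff]
    refine ⟨fun ⟨⟨hRA, _⟩, hRf⟩ => ⟨fun i a h => hRA _ h, hRf⟩,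
      fun ⟨hRA, hRf⟩ => ⟨⟨fun q hq => hRA q.2 q.1 hq, ?_⟩, hRf⟩⟩
    rw [← sum_levelSums_two_pow_mul, hRf, hf]
  rw [Nat.card_congr ((Equiv.subtypeEquivRight hfiber).trans (levelsEquiv f.support P hP)),
    Nat.card_pi, ← prod_coe_sort f.support]
  exact Fintype.prod_congr _ _ fun i => (dA_eq_card_finsets hA _).symm

end PositiveParts

theorem stmt_5_general (A : Set ℕ) (n : ℕ) :
    pA A n =
      ∑ᶠ (f : ℕ →₀ ℕ) (_ : (f.sum fun i N => 2 ^ i * N) = n),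
        ∏ᶠ i : ℕ, dA A (f i) := by
  set B : Set ℕ := {a ∈ A | 0 < a}
  have hB : ∀ a ∈ B, 0 < a := fun _ ha => ha.2
  have e := partitionsEquivBinary hB n
  have := Finite.of_equiv _ e
  have : Fintype {f : ℕ →₀ ℕ // (f.sum fun i N => 2 ^ i * N) = n} :=
    (Finsupp.finite_setOf_sum_two_pow_mul_eq n).fintype
  rw [← pA_sep_pos, ← dA_sep_pos, pA, Nat.card_congr e,
    Nat.card_eq_sum_card_fiber (q := fun f => (f.sum fun i N => 2 ^ i * N) = n) levelSums
      fun R hR => (sum_levelSums_two_pow_mul R).trans hR.2,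
    ← finsum_subtype_eq_finsum_cond, finsum_eq_sum_of_fintype]
  exact Fintype.sum_congr _ _ fun f =>
    (card_levelSums_eq_prod_dA hB f f.2).trans (finprod_dA_eq_prod_support B f).symm

theorem stmt_5 (A : Set ℕ) (hA : ∀ a ∈ A, 0 < a) (n : ℕ) (hn : 1 ≤ n) :
    pA A n =
      ∑ᶠ (f : ℕ →₀ ℕ) (_ : (f.sum fun i N => 2 ^ i * N) = n),
        ∏ᶠ i : ℕ, dA A (f i) :=
  stmt_5_general A n
end

section
/- Let A be a set of positive integers and α an even positive integer. Let p̄^A(n) := E^A(n) − O^A(n) be the signed count of unrestricted partitions of n into parts of A by parity of number of parts, and p̄^A_α(n) := E^A_α(n) − O^A_α(n) the analogous signed count over partitions where each part appears at most α times. Then for every n ≥ 1, p̄^A(n) = ∑ over all nonnegative integer solutions (N_0, N_1, ...) of n = ∑_{i≥0} (α+1)^i N_i of ∏_{i≥0} p̄^A_α(N_i). -/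
/-- Signed count of partitions of `n` into parts from `A` by parity of number of parts. -/
noncomputable def pBar (A : Set ℕ) (n : ℕ) : ℤ :=
  (Nat.card {p : n.Partition // (∀ a ∈ p.parts, a ∈ A) ∧ Even (Multiset.card p.parts)} : ℤ) -
    (Nat.card {p : n.Partition // (∀ a ∈ p.parts, a ∈ A) ∧ Odd (Multiset.card p.parts)} : ℤ)

/-- Signed count, by parity of number of parts, of partitions of `n` into parts from `A`
with each part used at most `α` times. -/
noncomputable def pBarRes (A : Set ℕ) (α : ℕ) (n : ℕ) : ℤ :=
  (Nat.card {p : n.Partition //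
      (∀ a ∈ p.parts, a ∈ A) ∧ (∀ a, p.parts.count a ≤ α) ∧
        Even (Multiset.card p.parts)} : ℤ) -
    (Nat.card {p : n.Partition //
      (∀ a ∈ p.parts, a ∈ A) ∧ (∀ a, p.parts.count a ≤ α) ∧
        Odd (Multiset.card p.parts)} : ℤ)

/-!
Write each multiplicity `c` of a part as `c = r + (α + 1) q` with `r ≤ α`. This splits every
partition `M` of `n` into parts from `A` uniquely as `M = Q + (α + 1) • R`, where `Q` uses each
part at most `α` times and `R` is an arbitrary partition into parts from `A`. As `α + 1` is odd,
`(-1) ^ |M| = (-1) ^ |Q| * (-1) ^ |R|`, so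
`p̄^A(n) = ∑_{m + (α + 1) N = n} p̄^A_α(m) p̄^A(N)`.
Unfolding this recursion in `N` (which is smaller than `n` once `n > 0`) produces the sum over
all expansions `n = ∑ (α + 1) ^ i N_i`.
-/

open Finset
open scoped Classical

lemma natCard_even_sub_natCard_odd {β : Type*} [Fintype β] (P : β → Prop) [DecidablePred P]
    (k : β → ℕ) :
    (Nat.card {x // P x ∧ Even (k x)} : ℤ) - Nat.card {x // P x ∧ Odd (k x)} =
      ∑ x ∈ univ.filter P, (-1 : ℤ) ^ k x := by
  simp only [neg_one_pow_eq_ite, sum_ite, sum_const, Nat.card_eq_fintype_card,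
    Fintype.card_subtype, filter_filter, ← Nat.not_even_iff_odd]
  simp [sub_eq_add_neg]

namespace Multiset

variable {β : Type*} [DecidableEq β] {k : ℕ}

noncomputable def mod (M : Multiset β) (k : ℕ) : Multiset β :=
  Finsupp.toMultiset (M.toFinsupp.mapRange (· % k) (Nat.zero_mod k))

noncomputable def div (M : Multiset β) (k : ℕ) : Multiset β :=
  Finsupp.toMultiset (M.toFinsupp.mapRange (· / k) (Nat.zero_div k))

@[simp]
lemma count_mod (M : Multiset β) (k : ℕ) (a : β) : (M.mod k).count a = M.count a % k := by
  simp [mod]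

@[simp]
lemma count_div (M : Multiset β) (k : ℕ) (a : β) : (M.div k).count a = M.count a / k := by
  simp [div]

lemma mod_add_nsmul_div (M : Multiset β) (k : ℕ) : M.mod k + k • M.div k = M := by
  ext a
  simp [Nat.mod_add_div]

lemma mod_le (M : Multiset β) (k : ℕ) : M.mod k ≤ M :=
  le_iff_count.2 fun a => by simpa using Nat.mod_le _ _

lemma div_le (M : Multiset β) (k : ℕ) : M.div k ≤ M :=
  le_iff_count.2 fun a => by simpa using Nat.div_le_self _ _

lemma add_nsmul_mod {Q : Multiset β} (hQ : ∀ a, Q.count a < k) (R : Multiset β) :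
    (Q + k • R).mod k = Q := by
  ext a
  simp [Nat.mod_eq_of_lt (hQ a)]

lemma add_nsmul_div {Q : Multiset β} (hQ : ∀ a, Q.count a < k) (R : Multiset β) :
    (Q + k • R).div k = R := by
  ext a
  have hk : 0 < k := (Nat.zero_le _).trans_lt (hQ a)
  simp [Nat.add_mul_div_left _ _ hk, Nat.div_eq_of_lt (hQ a)]

end Multiset

noncomputable def partsIn (A : Set ℕ) (n : ℕ) : Finset (Multiset ℕ) :=
  (univ.filter fun p : n.Partition => ∀ a ∈ p.parts, a ∈ A).image Nat.Partition.parts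

lemma mem_partsIn {A : Set ℕ} {n : ℕ} {M : Multiset ℕ} :
    M ∈ partsIn A n ↔ (∀ a ∈ M, 0 < a ∧ a ∈ A) ∧ M.sum = n := by
  simp only [partsIn, mem_image, mem_filter, mem_univ, true_and]
  constructor
  · rintro ⟨p, hA, rfl⟩
    exact ⟨fun a ha => ⟨p.parts_pos ha, hA a ha⟩, p.parts_sum⟩
  · rintro ⟨hM, rfl⟩
    exact ⟨⟨M, fun ha => (hM _ ha).1, rfl⟩, fun a ha => (hM a ha).2, rfl⟩

lemma pBar_eq_sum (A : Set ℕ) (n : ℕ) :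
    pBar A n = ∑ M ∈ partsIn A n, (-1 : ℤ) ^ Multiset.card M := by
  rw [pBar, natCard_even_sub_natCard_odd, partsIn,
    sum_image fun p _ q _ h => Nat.Partition.ext h]

lemma pBarRes_eq_sum (A : Set ℕ) (α n : ℕ) :
    pBarRes A α n =
      ∑ M ∈ (partsIn A n).filter (∀ a, ·.count a ≤ α), (-1 : ℤ) ^ Multiset.card M := by
  simp only [pBarRes, ← and_assoc]
  rw [natCard_even_sub_natCard_odd, partsIn, filter_image, filter_filter,
    sum_image fun p _ q _ h => Nat.Partition.ext h]

lemma partsIn_zero (A : Set ℕ) : partsIn A 0 = {0} := by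
  ext M
  simp only [mem_partsIn, mem_singleton, Multiset.sum_eq_zero_iff]
  refine ⟨fun ⟨hpos, hzero⟩ => Multiset.eq_zero_of_forall_notMem fun a ha => ?_, ?_⟩
  · exact (hpos a ha).1.ne' (hzero a ha)
  · rintro rfl
    simp

lemma pBar_zero (A : Set ℕ) : pBar A 0 = 1 := by
  simp [pBar_eq_sum, partsIn_zero]

lemma pBarRes_zero (A : Set ℕ) (α : ℕ) : pBarRes A α 0 = 1 := by
  simp [pBarRes_eq_sum, partsIn_zero, filter_singleton]

def splitPairs (k n : ℕ) : Finset (ℕ × ℕ) :=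
  (range (n + 1) ×ˢ range (n + 1)).filter fun x => x.1 + k * x.2 = n

lemma mem_splitPairs {k n : ℕ} (hk : 0 < k) {x : ℕ × ℕ} :
    x ∈ splitPairs k n ↔ x.1 + k * x.2 = n := by
  simp only [splitPairs, mem_filter, mem_product, mem_range, and_iff_right_iff_imp]
  intro h
  constructor <;> nlinarith

lemma add_nsmul_mem_partsIn {A : Set ℕ} {k m N : ℕ} {Q R : Multiset ℕ}
    (hQ : Q ∈ partsIn A m) (hR : R ∈ partsIn A N) : Q + k • R ∈ partsIn A (m + k * N) := by
  rw [mem_partsIn] at *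
  simp only [Multiset.mem_add, Multiset.sum_add, Multiset.sum_nsmul, hQ.2, hR.2, smul_eq_mul,
    and_true]
  rintro a (ha | ha)
  exacts [hQ.1 a ha, hR.1 a (Multiset.mem_of_mem_nsmul ha)]

lemma mem_partsIn_sum_of_le {A : Set ℕ} {n : ℕ} {M Q : Multiset ℕ} (hM : M ∈ partsIn A n)
    (hQ : Q ≤ M) : Q ∈ partsIn A Q.sum :=
  mem_partsIn.2 ⟨fun a ha => (mem_partsIn.1 hM).1 a (Multiset.subset_of_le hQ ha), rfl⟩

lemma pBar_eq_sum_pBarRes_mul_pBar (A : Set ℕ) {α : ℕ} (hα : Even α) (n : ℕ) :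
    pBar A n = ∑ x ∈ splitPairs (α + 1) n, pBarRes A α x.1 * pBar A x.2 := by
  simp only [pBar_eq_sum, pBarRes_eq_sum, sum_mul_sum, ← sum_product']
  rw [sum_sigma']
  symm
  refine sum_bij' (fun y _ => y.2.1 + (α + 1) • y.2.2)
    (fun M _ => ⟨((M.mod (α + 1)).sum, (M.div (α + 1)).sum), (M.mod (α + 1), M.div (α + 1))⟩)
    ?_ ?_ ?_ ?_ ?_
  · rintro ⟨⟨m, N⟩, Q, R⟩ hy
    simp only [mem_sigma, mem_splitPairs α.succ_pos, mem_product, mem_filter] at hy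
    exact hy.1 ▸ add_nsmul_mem_partsIn hy.2.1.1 hy.2.2
  · intro M hM
    simp only [mem_sigma, mem_splitPairs α.succ_pos, mem_product, mem_filter]
    refine ⟨?_, ⟨mem_partsIn_sum_of_le hM (M.mod_le _), fun a => ?_⟩,
      mem_partsIn_sum_of_le hM (M.div_le _)⟩
    · conv_rhs => rw [← (mem_partsIn.1 hM).2, ← M.mod_add_nsmul_div (α + 1)]
      simp [Multiset.sum_nsmul]
    · simpa using Nat.le_of_lt_succ (Nat.mod_lt _ α.succ_pos)
  · rintro ⟨⟨m, N⟩, Q, R⟩ hy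
    simp only [mem_sigma, mem_splitPairs α.succ_pos, mem_product, mem_filter,
      mem_partsIn] at hy
    obtain ⟨-, ⟨⟨-, rfl⟩, hQ⟩, -, rfl⟩ := hy
    have hQ' : ∀ a, Q.count a < α + 1 := fun a => Nat.lt_succ_of_le (hQ a)
    simp only [Multiset.add_nsmul_mod hQ', Multiset.add_nsmul_div hQ']
  · intro M _
    exact M.mod_add_nsmul_div (α + 1)
  · rintro ⟨x, Q, R⟩ -
    rw [Multiset.card_add, Multiset.card_nsmul, pow_add, pow_mul,
      (Even.add_one hα).neg_one_pow]

section BaseValue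

open Finsupp

def baseValue (k : ℕ) (f : ℕ →₀ ℕ) : ℕ :=
  f.sum fun i N => k ^ i * N

noncomputable def shiftSucc (f : ℕ →₀ ℕ) : ℕ →₀ ℕ :=
  f.embDomain (addRightEmbedding 1)

noncomputable def tailSucc (f : ℕ →₀ ℕ) : ℕ →₀ ℕ :=
  f.comapDomain (· + 1) (add_left_injective 1).injOn

variable {k : ℕ}

lemma baseValue_add (f g : ℕ →₀ ℕ) : baseValue k (f + g) = baseValue k f + baseValue k g :=
  sum_add_index' (fun _ => mul_zero _) fun _ _ _ => mul_add _ _ _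

lemma baseValue_single_zero (m : ℕ) : baseValue k (single 0 m) = m := by
  simp [baseValue]

lemma baseValue_shiftSucc (f : ℕ →₀ ℕ) : baseValue k (shiftSucc f) = k * baseValue k f := by
  rw [baseValue, shiftSucc, sum_embDomain, baseValue, Finsupp.mul_sum]
  exact sum_congr fun _ _ => by simp [pow_succ]; ring

lemma pow_mul_apply_le_baseValue (f : ℕ →₀ ℕ) (i : ℕ) : k ^ i * f i ≤ baseValue k f := by
  by_cases hi : i ∈ f.support
  · exact Finset.single_le_sum (f := fun i => k ^ i * f i) (fun _ _ => Nat.zero_le _) hi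
  · simp [notMem_support_iff.1 hi]

@[simp]
lemma shiftSucc_apply_zero (g : ℕ →₀ ℕ) : shiftSucc g 0 = 0 :=
  embDomain_of_notMem_range _ _ _ (by simp)

@[simp]
lemma shiftSucc_apply_succ (g : ℕ →₀ ℕ) (i : ℕ) : shiftSucc g (i + 1) = g i :=
  embDomain_apply_self (addRightEmbedding 1) g i

@[simp]
lemma tailSucc_apply (f : ℕ →₀ ℕ) (i : ℕ) : tailSucc f i = f (i + 1) := rfl

@[simp]
lemma tailSucc_single_zero_add_shiftSucc (m : ℕ) (g : ℕ →₀ ℕ) :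
    tailSucc (single 0 m + shiftSucc g) = g := by
  ext i
  simp

lemma single_zero_add_shiftSucc_tailSucc (f : ℕ →₀ ℕ) :
    single 0 (f 0) + shiftSucc (tailSucc f) = f := by
  ext (_ | i) <;> simp

lemma baseValue_eq_apply_zero_add_baseValue_tailSucc (f : ℕ →₀ ℕ) :
    baseValue k f = f 0 + k * baseValue k (tailSucc f) := by
  conv_lhs => rw [← single_zero_add_shiftSucc_tailSucc f]
  rw [baseValue_add, baseValue_single_zero, baseValue_shiftSucc]

lemma prod_single_zero_add_shiftSucc {R : Type*} [CommMonoid R] {h : ℕ → R} (h0 : h 0 = 1)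
    (m : ℕ) (g : ℕ →₀ ℕ) :
    (single 0 m + shiftSucc g).prod (fun _ N => h N) = h m * g.prod fun _ N => h N := by
  have hdisj : Disjoint (single 0 m).support (shiftSucc g).support := by
    rw [Finset.disjoint_left]
    intro a ha hb
    rw [Finset.mem_singleton.1 (support_single_subset ha)] at hb
    simp [shiftSucc, support_embDomain] at hb
  rw [prod_add_index_of_disjoint hdisj, prod_single_index h0, shiftSucc, prod_embDomain]

noncomputable def solutions (k n : ℕ) : Finset (ℕ →₀ ℕ) :=
  ((range (n + 1)).finsupp fun _ => range (n + 1)).filter fun f => baseValue k f = n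

lemma mem_solutions (hk : 2 ≤ k) {n : ℕ} {f : ℕ →₀ ℕ} :
    f ∈ solutions k n ↔ baseValue k f = n := by
  refine ⟨fun h => (mem_filter.1 h).2, fun h => mem_filter.2 ⟨mem_finsupp_iff.2 ⟨?_, ?_⟩, h⟩⟩
  · intro i hi
    have hle := h ▸ pow_mul_apply_le_baseValue (k := k) f i
    have hpos : 0 < f i := Nat.pos_of_ne_zero (mem_support_iff.1 hi)
    have : i < k ^ i := (Nat.lt_two_pow_self).trans_le (Nat.pow_le_pow_left hk i)
    rw [mem_range]
    nlinarith
  · intro i _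
    have hle := h ▸ pow_mul_apply_le_baseValue (k := k) f i
    rw [mem_range]
    nlinarith [Nat.one_le_pow i k (by omega)]

lemma solutions_zero (hk : 2 ≤ k) : solutions k 0 = {0} := by
  ext f
  rw [mem_solutions hk, mem_singleton]
  refine ⟨fun h => ?_, fun h => by simp [h, baseValue]⟩
  ext i
  have hle := h ▸ pow_mul_apply_le_baseValue (k := k) f i
  have hk0 : k ≠ 0 := by omega
  simpa [hk0] using hle

lemma sum_solutions {R : Type*} [AddCommMonoid R] (hk : 2 ≤ k) (n : ℕ) (F : (ℕ →₀ ℕ) → R) :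
    ∑ f ∈ solutions k n, F f =
      ∑ x ∈ splitPairs k n, ∑ g ∈ solutions k x.2, F (single 0 x.1 + shiftSucc g) := by
  rw [sum_sigma']
  refine sum_bij' (fun f _ => ⟨(f 0, baseValue k (tailSucc f)), tailSucc f⟩)
    (fun y _ => single 0 y.1.1 + shiftSucc y.2) ?_ ?_ ?_ ?_ ?_
  · intro f hf
    rw [mem_solutions hk, baseValue_eq_apply_zero_add_baseValue_tailSucc] at hf
    simp [mem_splitPairs (by omega : 0 < k), mem_solutions hk, hf]
  · rintro ⟨⟨m, N⟩, g⟩ hy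
    simp only [mem_sigma, mem_splitPairs (by omega : 0 < k), mem_solutions hk] at hy ⊢
    rw [baseValue_add, baseValue_single_zero, baseValue_shiftSucc, hy.2, hy.1]
  · intro f _
    exact single_zero_add_shiftSucc_tailSucc f
  · rintro ⟨⟨m, N⟩, g⟩ hy
    simp only [mem_sigma, mem_solutions hk] at hy
    simp [hy.2]
  · intro f _
    rw [single_zero_add_shiftSucc_tailSucc]

end BaseValue

lemma eq_sum_solutions_of_eq_sum_splitPairs {R : Type*} [CommSemiring R] {k : ℕ} (hk : 2 ≤ k)
    {g h : ℕ → R} (hg0 : g 0 = 1) (h0 : h 0 = 1)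
    (hrec : ∀ n, 0 < n → g n = ∑ x ∈ splitPairs k n, h x.1 * g x.2) (n : ℕ) :
    g n = ∑ f ∈ solutions k n, f.prod fun _ N => h N := by
  induction n using Nat.strong_induction_on with
  | _ n ih =>
    rcases n.eq_zero_or_pos with rfl | hn
    · simp [solutions_zero hk, hg0]
    rw [hrec n hn, sum_solutions hk]
    refine sum_congr rfl fun x hx => ?_
    rw [mem_splitPairs (by omega)] at hx
    have hlt : x.2 < n := by
      rcases x.2.eq_zero_or_pos with h2 | h2
      · omega
      · nlinarith
    simp only [ih x.2 hlt, mul_sum, prod_single_zero_add_shiftSucc h0]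

lemma finprod_eq_finsuppProd {M : Type*} [CommMonoid M] {h : ℕ → M} (h0 : h 0 = 1)
    (f : ℕ →₀ ℕ) : ∏ᶠ i, h (f i) = f.prod fun _ N => h N :=
  finprod_eq_finsetProd_of_mulSupport_subset _ fun i hi =>
    Finsupp.mem_support_iff.2 fun hfi => hi (by simp [hfi, h0])

theorem stmt_12_general (A : Set ℕ) (α : ℕ) (hα : Even α) (hα' : 0 < α) (n : ℕ) :
    pBar A n =
      ∑ᶠ (f : ℕ →₀ ℕ) (_ : (f.sum fun i N => (α + 1) ^ i * N) = n),
        ∏ᶠ i : ℕ, pBarRes A α (f i) := by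
  have hk : 2 ≤ α + 1 := by omega
  have hsol : {f | baseValue (α + 1) f = n} = ↑(solutions (α + 1) n) := by
    ext f
    exact (mem_solutions hk).symm
  simp only [finprod_eq_finsuppProd (pBarRes_zero A α)]
  change pBar A n = ∑ᶠ f ∈ {f | baseValue (α + 1) f = n}, _
  rw [hsol, finsum_mem_coe_finset]
  exact eq_sum_solutions_of_eq_sum_splitPairs hk (pBar_zero A) (pBarRes_zero A α)
    (fun n _ => pBar_eq_sum_pBarRes_mul_pBar A hα n) n

theorem stmt_12 (A : Set ℕ) (hA : ∀ a ∈ A, 0 < a) (α : ℕ) (hα : Even α) (hα' : 0 < α)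
    (n : ℕ) (hn : 1 ≤ n) :
    pBar A n =
      ∑ᶠ (f : ℕ →₀ ℕ) (_ : (f.sum fun i N => (α + 1) ^ i * N) = n),
        ∏ᶠ i : ℕ, pBarRes A α (f i) :=
  stmt_12_general A α hα hα' n
end

section
/- For |q| < 1, an even positive integer α, and any injective ψ : ℕ → ℕ with positive values, ∏_{n≥1} 1/(1 + q^{ψ(n)}) = ∏_{i≥0} ∏_{n≥1} (1 − q^{(α+1)^i ψ(n)} + q^{2(α+1)^i ψ(n)} − ... + q^{α(α+1)^i ψ(n)}). -/
/-!
For even `α`, `∑_{k ≤ α} (-x)^k = (1 + x^(α+1)) / (1 + x)`, so the `i`-th inner product is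
`P((α+1)^(i+1)) / P((α+1)^i)` with `P(m) = ∏_n (1 + q^(m ψ n))`, and the outer product telescopes
to `1 / P(1)`. This is made rigorous on logarithms: with `F i = ∑_n log (1 + q^((α+1)^i ψ n))`,
the double series `∑_{i,n}` converges absolutely because `(α+1)^i ψ n ≥ i + ψ n`, so `F` is
summable and `∑_i (F (i+1) - F i) = -F 0`.
-/

open Complex Finset

theorem one_add_ne_zero_of_norm_lt_one {R : Type*} [SeminormedRing R] [NormOneClass R] {x : R}
    (hx : ‖x‖ < 1) : 1 + x ≠ 0 := by
  intro h
  rw [eq_neg_of_add_eq_zero_right h, norm_neg, norm_one] at hx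
  exact lt_irrefl 1 hx

theorem Complex.one_add_pow_ne_zero {q : ℂ} (hq : ‖q‖ < 1) {d : ℕ} (hd : d ≠ 0) :
    1 + q ^ d ≠ 0 :=
  one_add_ne_zero_of_norm_lt_one (by rw [norm_pow]; exact pow_lt_one₀ (norm_nonneg q) hq hd)

theorem alternating_geom_sum_mul_one_add {R : Type*} [CommRing R] (x : R) {α : ℕ}
    (hα : Even α) : (∑ k ∈ range (α + 1), (-1) ^ k * x ^ k) * (1 + x) = 1 + x ^ (α + 1) := by
  have h := geom_sum_mul (-x) (α + 1)
  simp only [neg_pow x, hα.add_one.neg_one_pow] at h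
  linear_combination -h

theorem Summable.hasSum_sub_succ {G : Type*} [AddCommGroup G] [TopologicalSpace G]
    [IsTopologicalAddGroup G] {F : ℕ → G} (hF : Summable F) :
    HasSum (fun i ↦ F (i + 1) - F i) (-F 0) := by
  have hshift : HasSum (fun i ↦ F (i + 1)) (∑' i, F i - F 0) := by
    simpa using (hasSum_nat_add_iff' 1).2 hF.hasSum
  simpa using hshift.sub hF.hasSum

theorem Complex.norm_log_one_add_le_div {z : ℂ} (hz : ‖z‖ < 1) :
    ‖log (1 + z)‖ ≤ ‖z‖ / (1 - ‖z‖) := by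
  have hpos : 0 < 1 - ‖z‖ := by linarith
  refine (norm_log_one_add_le hz).trans (le_of_sub_nonneg ?_)
  have hgap : ‖z‖ / (1 - ‖z‖) - (‖z‖ ^ 2 * (1 - ‖z‖)⁻¹ / 2 + ‖z‖) =
      ‖z‖ ^ 2 / (2 * (1 - ‖z‖)) := by
    field_simp
    ring
  rw [hgap]
  positivity

theorem Complex.norm_log_one_add_pow_le {q : ℂ} (hq : ‖q‖ < 1) {e : ℕ} (he : e ≠ 0) :
    ‖log (1 + q ^ e)‖ ≤ ‖q‖ ^ e / (1 - ‖q‖) := by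
  have hqe : ‖q‖ ^ e ≤ ‖q‖ := pow_le_of_le_one (norm_nonneg q) hq.le he
  refine (norm_log_one_add_le_div (by rw [norm_pow]; linarith)).trans ?_
  rw [norm_pow]
  gcongr

theorem Complex.summable_log_one_add_pow_mul {q : ℂ} (hq : ‖q‖ < 1) {m ψ : ℕ → ℕ}
    (hm : ∀ i, i < m i) (hψ : Function.Injective ψ) (hψ1 : ∀ n, 1 ≤ ψ n) :
    Summable fun p : ℕ × ℕ ↦ log (1 + q ^ (m p.1 * ψ p.2)) := by
  have hgeom : Summable fun i : ℕ ↦ ‖q‖ ^ i := summable_geometric_of_lt_one (norm_nonneg q) hq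
  have hprod : Summable fun p : ℕ × ℕ ↦ ‖q‖ ^ p.1 * ‖q‖ ^ ψ p.2 :=
    hgeom.mul_of_nonneg (hgeom.comp_injective hψ) (fun _ ↦ pow_nonneg (norm_nonneg q) _)
      fun _ ↦ pow_nonneg (norm_nonneg q) _
  refine Summable.of_norm_bounded (hprod.div_const (1 - ‖q‖)) fun ⟨i, n⟩ ↦ ?_
  have hexp : i + ψ n ≤ m i * ψ n := by nlinarith [hm i, hψ1 n]
  have hne : m i * ψ n ≠ 0 := mul_ne_zero (by have := hm i; omega) (by have := hψ1 n; omega)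
  refine (norm_log_one_add_pow_le hq hne).trans ?_
  rw [← pow_add]
  exact div_le_div_of_nonneg_right (pow_le_pow_of_le_one (norm_nonneg q) hq.le hexp)
    (by linarith)

theorem Complex.alternating_sum_pow_mul_eq_exp {q : ℂ} (hq : ‖q‖ < 1) {α e : ℕ} (hα : Even α)
    (he : e ≠ 0) :
    ∑ k ∈ range (α + 1), (-1) ^ k * q ^ (k * e) =
      exp (log (1 + q ^ ((α + 1) * e)) - log (1 + q ^ e)) := by
  have hqe := one_add_pow_ne_zero hq he
  rw [exp_sub, exp_log (one_add_pow_ne_zero hq (mul_ne_zero (Nat.succ_ne_zero α) he)),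
    exp_log hqe, eq_div_iff hqe, mul_comm (α + 1), pow_mul]
  simp only [pow_mul']
  exact alternating_geom_sum_mul_one_add _ hα

theorem stmt_13 (q : ℂ) (hq : ‖q‖ < 1) (ψ : ℕ → ℕ)
    (hinj : Function.Injective ψ) (hpos : ∀ n, 1 ≤ ψ n)
    (α : ℕ) (hα : Even α) (hα' : 0 < α) :
    ∏' n : ℕ, ((1 : ℂ) + q ^ ψ n)⁻¹ =
      ∏' i : ℕ, ∏' n : ℕ, ∑ k ∈ Finset.range (α + 1),
        (-1 : ℂ) ^ k * q ^ (k * ((α + 1) ^ i * ψ n)) := by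
  have hG := summable_log_one_add_pow_mul hq
    (fun i ↦ Nat.lt_pow_self (by omega : 1 < α + 1)) hinj hpos
  set F : ℕ → ℂ := fun i ↦ ∑' n, log (1 + q ^ ((α + 1) ^ i * ψ n))
  have hψ : ∀ n, ψ n ≠ 0 := fun n ↦ Nat.one_le_iff_ne_zero.mp (hpos n)
  have hne : ∀ i n, (α + 1) ^ i * ψ n ≠ 0 := fun i n ↦ mul_ne_zero (by positivity) (hψ n)
  have hinner : ∀ i, HasProd (fun n ↦ ∑ k ∈ range (α + 1),
      (-1 : ℂ) ^ k * q ^ (k * ((α + 1) ^ i * ψ n))) (exp (F (i + 1) - F i)) := fun i ↦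
    ((hG.prod_factor (i + 1)).hasSum.sub (hG.prod_factor i).hasSum).cexp.congr_fun fun n ↦ by
      simp only [Function.comp, alternating_sum_pow_mul_eq_exp hq hα (hne i n), pow_succ',
        mul_assoc]
  have hRHS := hG.prod.hasSum_sub_succ.cexp.congr_fun fun i ↦ (hinner i).tprod_eq
  have hLHS : HasProd (fun n ↦ ((1 : ℂ) + q ^ ψ n)⁻¹) (exp (-F 0)) :=
    (hG.prod_factor 0).hasSum.neg.cexp.congr_fun fun n ↦ by
      simp [exp_neg, exp_log (one_add_pow_ne_zero hq (hψ n))]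
  rw [hLHS.tprod_eq, hRHS.tprod_eq]
end
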